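/- If E satisfies (P2)–(P4), then the induced function on probability distributions satisfies the Khinchin–Faddeev recursion: E(|λ₁|²,…,|λ_{n−1}|², η|λₙ|², (1−η)|λₙ|²) = E(|λ₁|²,…,|λₙ|²) + |λₙ|² E(η, 1−η) for all distributions of amplitudes (λᵢ) and all η ∈ [0,1]. -/

import Mathlib

open scoped BigOperators ComplexOrder
open Matrix

noncomputable section

/-- Finite-dimensional complex Hilbert space of dimension `m`. -/
abbrev H (m : ℕ) := EuclideanSpace ℂ (Fin m)

/-- The tensor product `H m ⊗ H n`, realized as `EuclideanSpace ℂ (Fin m × Fin n)`. -/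
abbrev HT (m n : ℕ) := EuclideanSpace ℂ (Fin m × Fin n)

/-- Elementary tensor `a ⊗ b`. -/
def tensorVec {m n : ℕ} (a : H m) (b : H n) : HT m n :=
  WithLp.toLp 2 (fun p : Fin m × Fin n => a p.1 * b p.2)

/-- The projection `|ψ⟩⟨ψ|` as a matrix. -/
def proj {m n : ℕ} (ψ : HT m n) : Matrix (Fin m × Fin n) (Fin m × Fin n) ℂ :=
  Matrix.of fun x y => ψ x * (starRingEnd ℂ) (ψ y)

/-- The projection `|a⟩⟨a|` on a single factor. -/
def proj1 {m : ℕ} (a : H m) : Matrix (Fin m) (Fin m) ℂ :=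
  Matrix.of fun i j => a i * (starRingEnd ℂ) (a j)

/-- Partial trace over the second factor. -/
def ptrace2 {m n : ℕ} (M : Matrix (Fin m × Fin n) (Fin m × Fin n) ℂ) :
    Matrix (Fin m) (Fin m) ℂ :=
  Matrix.of fun i j => ∑ k : Fin n, M (i, k) (j, k)

/-- Partial trace over the first factor. -/
def ptrace1 {m n : ℕ} (M : Matrix (Fin m × Fin n) (Fin m × Fin n) ℂ) :
    Matrix (Fin n) (Fin n) ℂ :=
  Matrix.of fun i j => ∑ k : Fin m, M (k, i) (k, j)

/-- Von Neumann entropy `-Tr(ρ ln ρ)` of a Hermitian matrix, via its eigenvalues. -/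
def vnEnt {k : ℕ} {M : Matrix (Fin k) (Fin k) ℂ} (h : M.IsHermitian) : ℝ :=
  ∑ i, Real.negMulLog (h.eigenvalues i)

/-- Kronecker product of square matrices. -/
def kron {m n : ℕ} (A : Matrix (Fin m) (Fin m) ℂ) (B : Matrix (Fin n) (Fin n) ℂ) :
    Matrix (Fin m × Fin n) (Fin m × Fin n) ℂ :=
  Matrix.of fun p q => A p.1 q.1 * B p.2 q.2

/-- Action of a matrix on a vector. -/
def matVec {m n : ℕ} (M : Matrix (Fin m × Fin n) (Fin m × Fin n) ℂ) (ψ : HT m n) :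
    HT m n := WithLp.toLp 2 (fun p : Fin m × Fin n => ∑ q, M p q * ψ q)

/-- The canonical pure state with Schmidt coefficients `μ`. -/
def stdVec {k : ℕ} (μ : Fin k → ℝ) : HT k k :=
  WithLp.toLp 2 (fun p : Fin k × Fin k => if p.1 = p.2 then (Real.sqrt (μ p.1) : ℂ) else 0)

/-- Strong Schmidt orthogonality: the supports of both reduced density matrices
are orthogonal. -/
def SchmidtOrthogonal {m n : ℕ} (ψ φ : HT m n) : Prop :=
  ptrace2 (proj ψ) * ptrace2 (proj φ) = 0 ∧ ptrace1 (proj ψ) * ptrace1 (proj φ) = 0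

/-- Image of `ψ` under the tensor product of two isometric embeddings. -/
def tensorMap {m n m' n' : ℕ} (f : H m →ₗᵢ[ℂ] H m') (g : H n →ₗᵢ[ℂ] H n')
    (ψ : HT m n) : HT m' n' :=
  WithLp.toLp 2 (fun p : Fin m' × Fin n' => ∑ q : Fin m × Fin n,
    ψ q * f (EuclideanSpace.single q.1 1) p.1 * g (EuclideanSpace.single q.2 1) p.2)

/-- Finite probability distribution. -/
def IsProbDist {k : ℕ} (p : Fin k → ℝ) : Prop := (∀ i, 0 ≤ p i) ∧ ∑ i, p i = 1

/-- Multiset of nonzero Schmidt coefficients of `ψ` (eigenvalues of the reduced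
density matrix). -/
def schmidtMultiset {m n : ℕ} (ψ : HT m n) (h : (ptrace2 (proj ψ)).IsHermitian) :
    Multiset ℝ :=
  (Finset.univ.val.map h.eigenvalues).filter (· ≠ 0)

/-- Trace norm of a matrix. -/
def trNorm {a b : ℕ} (A : Matrix (Fin a) (Fin b) ℂ) : ℝ :=
  ∑ i, Real.sqrt ((Matrix.posSemidef_conjTranspose_mul_self A).1.eigenvalues i)

/-- The greatest cross norm. -/
def gcn {m n : ℕ} (M : Matrix (Fin m × Fin n) (Fin m × Fin n) ℂ) : ℝ :=
  sInf { t : ℝ | ∃ (k : ℕ) (x : Fin k → Matrix (Fin m) (Fin m) ℂ)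
    (y : Fin k → Matrix (Fin n) (Fin n) ℂ),
    M = ∑ i, kron (x i) (y i) ∧ t = ∑ i, trNorm (x i) * trNorm (y i) }

/-- Density operator. -/
def IsDensity {d : Type*} [Fintype d] [DecidableEq d] (M : Matrix d d ℂ) : Prop :=
  M.PosSemidef ∧ M.trace = 1

/-! Refine the last outcome of `|λ|²` into two outcomes with conditional weights `η, 1 - η`.
Let `ψᵢ` be the canonical state of the `i`-th block of the refined distribution: the product
state `eᵢ ⊗ eᵢ` for `i < N`, and `√η e_N ⊗ e_N + √(1 - η) e_{N+1} ⊗ e_{N+1}` for `i = N`.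
The `ψᵢ` have disjoint Schmidt supports, and `∑ λᵢ ψᵢ` differs from the canonical state of the
refined distribution only by the phases of the `λᵢ`, which a diagonal local unitary removes.
The superposition axiom then gives `E(refined) = E(|λ|²) + ∑ |λᵢ|² E(ψᵢ)`, and by embedding
invariance `E(ψᵢ) = E(1) = 0` for `i < N` while `E(ψ_N) = E(η, 1 - η)`. -/

open Function

def diagVec {k : ℕ} (s : Fin k → ℂ) : HT k k :=
  WithLp.toLp 2 fun p => if p.1 = p.2 then s p.1 else 0

lemma stdVec_eq_diagVec {k : ℕ} (μ : Fin k → ℝ) :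
    stdVec μ = diagVec fun a => (Real.sqrt (μ a) : ℂ) := rfl

lemma norm_stdVec_of_isProbDist {k : ℕ} {μ : Fin k → ℝ} (hμ : IsProbDist μ) : ‖stdVec μ‖ = 1 := by
  rw [EuclideanSpace.norm_eq, Fintype.sum_prod_type, Real.sqrt_eq_one, ← hμ.2]
  refine Finset.sum_congr rfl fun a _ => ?_
  rw [Finset.sum_eq_single a (fun b _ hb => by simp [stdVec, Ne.symm hb]) (by simp)]
  simp [stdVec, Real.sq_sqrt (hμ.1 a)]

lemma ptrace2_proj_stdVec {k : ℕ} {μ : Fin k → ℝ} (hμ : ∀ a, 0 ≤ μ a) :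
    ptrace2 (proj (stdVec μ)) = diagonal fun a => (μ a : ℂ) := by
  ext a b
  rcases eq_or_ne a b with rfl | hab
  · simp [ptrace2, proj, stdVec, ← Complex.ofReal_mul, Real.mul_self_sqrt (hμ a)]
  · simp [ptrace2, proj, stdVec, hab, Ne.symm hab]

lemma ptrace1_proj_stdVec {k : ℕ} {μ : Fin k → ℝ} (hμ : ∀ a, 0 ≤ μ a) :
    ptrace1 (proj (stdVec μ)) = diagonal fun a => (μ a : ℂ) := by
  ext a b
  rcases eq_or_ne a b with rfl | hab
  · simp [ptrace1, proj, stdVec, ← Complex.ofReal_mul, Real.mul_self_sqrt (hμ a)]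
  · simp [ptrace1, proj, stdVec, hab]

lemma schmidtOrthogonal_stdVec {k : ℕ} {μ ν : Fin k → ℝ} (hμ : ∀ a, 0 ≤ μ a)
    (hν : ∀ a, 0 ≤ ν a) (hμν : ∀ a, μ a * ν a = 0) :
    SchmidtOrthogonal (stdVec μ) (stdVec ν) := by
  have h : (diagonal fun a => (μ a : ℂ)) * diagonal (fun a => (ν a : ℂ)) = 0 := by
    simp [diagonal_mul_diagonal, ← Complex.ofReal_mul, hμν]
  exact ⟨by rwa [ptrace2_proj_stdVec hμ, ptrace2_proj_stdVec hν],
    by rwa [ptrace1_proj_stdVec hμ, ptrace1_proj_stdVec hν]⟩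

lemma diagonal_mem_unitaryGroup {n : Type*} [Fintype n] [DecidableEq n] {𝕜 : Type*} [RCLike 𝕜]
    {u : n → 𝕜} (hu : ∀ a, ‖u a‖ = 1) : diagonal u ∈ unitaryGroup n 𝕜 := by
  rw [mem_unitaryGroup_iff, star_eq_conjTranspose, diagonal_conjTranspose, diagonal_mul_diagonal,
    ← diagonal_one]
  congr 1
  funext a
  simp [RCLike.mul_conj, hu a]

lemma kron_diagonal_one {m n : ℕ} (u : Fin m → ℂ) :
    kron (diagonal u) (1 : Matrix (Fin n) (Fin n) ℂ) = diagonal fun p => u p.1 := by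
  ext p q
  by_cases h : p = q
  · simp [kron, h]
  · rw [diagonal_apply_ne _ h]
    by_cases h1 : p.1 = q.1
    · simp [kron, one_apply_ne (fun h2 => h (Prod.ext h1 h2))]
    · simp [kron, diagonal_apply_ne _ h1]

lemma matVec_diagonal {m n : ℕ} (v : Fin m × Fin n → ℂ) (ψ : HT m n) :
    matVec (diagonal v) ψ = WithLp.toLp 2 (v * ψ) := by
  ext p
  simp [matVec, diagonal_apply]

lemma matVec_kron_diagonal_one_diagVec {k : ℕ} (u s : Fin k → ℂ) :
    matVec (kron (diagonal u) 1) (diagVec s) = diagVec (u * s) := by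
  ext p
  by_cases h : p.1 = p.2 <;> simp [kron_diagonal_one, matVec_diagonal, diagVec, h]

def EuclideanSpace.isometryOfInjective {𝕜 ι κ : Type*} [RCLike 𝕜] [Fintype ι] [Fintype κ]
    [DecidableEq ι] [DecidableEq κ] (σ : ι → κ) (hσ : Injective σ) :
    EuclideanSpace 𝕜 ι →ₗᵢ[𝕜] EuclideanSpace 𝕜 κ :=
  let b := EuclideanSpace.basisFun ι 𝕜
  let v : ι → EuclideanSpace 𝕜 κ := fun i => EuclideanSpace.single (σ i) 1
  (b.toBasis.constr 𝕜 v).isometryOfOrthonormal (v := b.toBasis)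
    (by rw [OrthonormalBasis.coe_toBasis]; exact b.orthonormal)
    (by
      rw [show ⇑(b.toBasis.constr 𝕜 v) ∘ ⇑b.toBasis = v from funext (b.toBasis.constr_basis 𝕜 v)]
      exact EuclideanSpace.orthonormal_single.comp σ hσ)

lemma EuclideanSpace.isometryOfInjective_single {𝕜 ι κ : Type*} [RCLike 𝕜] [Fintype ι]
    [Fintype κ] [DecidableEq ι] [DecidableEq κ] {σ : ι → κ} (hσ : Injective σ) (i : ι) :
    EuclideanSpace.isometryOfInjective σ hσ (EuclideanSpace.single i (1 : 𝕜)) =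
      EuclideanSpace.single (σ i) 1 := by
  rw [← EuclideanSpace.basisFun_apply ι 𝕜, ← OrthonormalBasis.coe_toBasis]
  exact Module.Basis.constr_basis _ _ _ _

lemma tensorMap_isometryOfInjective_stdVec {k m : ℕ} {σ : Fin k → Fin m} (hσ : Injective σ)
    {d : Fin m → ℝ} (hd : ∀ a ∉ Set.range σ, d a = 0) :
    tensorMap (EuclideanSpace.isometryOfInjective σ hσ)
      (EuclideanSpace.isometryOfInjective σ hσ) (stdVec (d ∘ σ)) = stdVec d := by
  ext ⟨a, b⟩
  simp only [tensorMap, EuclideanSpace.isometryOfInjective_single, stdVec, Fintype.sum_prod_type,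
    PiLp.single_apply, Function.comp_apply]
  have hterm : ∀ x y : Fin k,
      ((if x = y then (√(d (σ x)) : ℂ) else 0) * if a = σ x then 1 else 0) *
          (if b = σ y then 1 else 0) =
        if x = y then (if a = σ x ∧ b = σ x then (√(d (σ x)) : ℂ) else 0) else 0 := by
    intro x y
    split_ifs <;> simp_all
  simp only [hterm, Finset.sum_ite_eq, Finset.mem_univ, if_true]
  by_cases ha : a ∈ Set.range σ
  · obtain ⟨i, rfl⟩ := ha
    simp [hσ.eq_iff, ite_and, eq_comm]
  · simp only [hd a ha, Real.sqrt_zero, Complex.ofReal_zero, ite_self]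
    exact Finset.sum_eq_zero fun x _ => if_neg fun h => ha ⟨x, h.1.symm⟩

def mergeLast (N : ℕ) : Fin (N + 2) → Fin (N + 1) :=
  Fin.snoc (α := fun _ => Fin (N + 1)) id (Fin.last N)

def splitWeights (N : ℕ) (η : ℝ) : Fin (N + 2) → ℝ :=
  Fin.snoc (update (fun _ => 1) (Fin.last N) η) (1 - η)

@[simp] lemma mergeLast_castSucc {N : ℕ} (i : Fin (N + 1)) : mergeLast N i.castSucc = i := by
  simp [mergeLast]

@[simp] lemma mergeLast_last (N : ℕ) : mergeLast N (Fin.last (N + 1)) = Fin.last N := by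
  simp [mergeLast]

@[simp] lemma splitWeights_castSucc {N : ℕ} (η : ℝ) (i : Fin (N + 1)) :
    splitWeights N η i.castSucc = if i = Fin.last N then η else 1 := by
  simp [splitWeights, update_apply]

@[simp] lemma splitWeights_last (N : ℕ) (η : ℝ) :
    splitWeights N η (Fin.last (N + 1)) = 1 - η := by
  simp [splitWeights]

lemma splitWeights_nonneg {N : ℕ} {η : ℝ} (hη0 : 0 ≤ η) (hη1 : η ≤ 1) (a : Fin (N + 2)) :
    0 ≤ splitWeights N η a := by
  induction a using Fin.lastCases with
  | last => simpa using hη1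
  | cast i => by_cases hi : i = Fin.last N <;> simp [hi, hη0]

lemma sum_splitWeights_fiber {N : ℕ} (η : ℝ) (i : Fin (N + 1)) :
    ∑ a with mergeLast N a = i, splitWeights N η a = 1 := by
  rw [Finset.sum_filter, Fin.sum_univ_castSucc]
  by_cases hi : i = Fin.last N
  · simp [hi]
  · simp [hi, Ne.symm hi]

lemma splitWeights_mul_norm_sq {N : ℕ} (η : ℝ) (lam : Fin (N + 1) → ℂ) :
    (fun a => splitWeights N η a * ‖lam (mergeLast N a)‖ ^ 2) =
      Fin.snoc (update (fun i => ‖lam i‖ ^ 2) (Fin.last N) (η * ‖lam (Fin.last N)‖ ^ 2))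
        ((1 - η) * ‖lam (Fin.last N)‖ ^ 2) := by
  funext a
  induction a using Fin.lastCases with
  | last => simp
  | cast i => by_cases hi : i = Fin.last N <;> simp [hi]

section Axioms

variable (E : ∀ m n : ℕ, HT m n → ℝ)

def LocalUnitaryInvariant : Prop :=
  ∀ (m n : ℕ) (U : Matrix (Fin m) (Fin m) ℂ) (V : Matrix (Fin n) (Fin n) ℂ),
    U ∈ Matrix.unitaryGroup (Fin m) ℂ → V ∈ Matrix.unitaryGroup (Fin n) ℂ →
    ∀ ψ : HT m n, E m n (matVec (kron U V) ψ) = E m n ψ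

def EmbeddingInvariant : Prop :=
  ∀ (m n m' n' : ℕ) (f : H m →ₗᵢ[ℂ] H m') (g : H n →ₗᵢ[ℂ] H n') (ψ : HT m n),
    E m' n' (tensorMap f g ψ) = E m n ψ

def SuperpositionAdditive : Prop :=
  ∀ (m n k : ℕ) (ψ : Fin k → HT m n), (∀ i, ‖ψ i‖ = 1) →
    (∀ i j, i ≠ j → SchmidtOrthogonal (ψ i) (ψ j)) →
    ∀ lam : Fin k → ℂ, (∑ i, ‖lam i‖ ^ 2) = 1 →
    E m n (∑ i, lam i • ψ i) =
      E k k (stdVec fun i => ‖lam i‖ ^ 2) + ∑ i, ‖lam i‖ ^ 2 * E m n (ψ i)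

variable {E}

theorem LocalUnitaryInvariant.apply_diagVec (hE : LocalUnitaryInvariant E) {k : ℕ}
    (s : Fin k → ℂ) : E k k (diagVec s) = E k k (stdVec fun a => ‖s a‖ ^ 2) := by
  let u : Fin k → ℂ := fun a => Complex.exp (Complex.arg (s a) * Complex.I)
  have hs : diagVec s = matVec (kron (diagonal u) 1) (stdVec fun a => ‖s a‖ ^ 2) := by
    rw [stdVec_eq_diagVec, matVec_kron_diagonal_one_diagVec]
    congr 1
    funext a
    simp only [Pi.mul_apply, u, Real.sqrt_sq (norm_nonneg _)]
    exact ((mul_comm _ _).trans (Complex.norm_mul_exp_arg_mul_I (s a))).symm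
  rw [hs, hE k k _ 1 (diagonal_mem_unitaryGroup fun a => Complex.norm_exp_ofReal_mul_I _)
    (one_mem _)]

theorem SuperpositionAdditive.apply_stdVec_const_one (hE : SuperpositionAdditive E) :
    E 1 1 (stdVec fun _ => 1) = 0 := by
  have h := hE 1 1 1 (fun _ => stdVec fun _ => 1)
    (fun _ => norm_stdVec_of_isProbDist ⟨fun _ => zero_le_one, by simp⟩)
    (fun i j hij => absurd (Subsingleton.elim i j) hij) (fun _ => 1) (by simp)
  simp only [Finset.univ_unique, Finset.sum_singleton, one_smul, norm_one, one_pow, one_mul] at h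
  linarith

theorem EmbeddingInvariant.apply_stdVec (hE : EmbeddingInvariant E) {k m : ℕ}
    {σ : Fin k → Fin m} (hσ : Injective σ) {d : Fin m → ℝ} (hd : ∀ a ∉ Set.range σ, d a = 0) :
    E m m (stdVec d) = E k k (stdVec (d ∘ σ)) := by
  rw [← tensorMap_isometryOfInjective_stdVec hσ hd, hE]

theorem apply_stdVec_grouping (hP2 : LocalUnitaryInvariant E) (hP4 : SuperpositionAdditive E)
    {m k : ℕ} (β : Fin m → Fin k) {w : Fin m → ℝ} (hw : ∀ a, 0 ≤ w a)
    (hw1 : ∀ i, ∑ a with β a = i, w a = 1) (lam : Fin k → ℂ) (hlam : ∑ i, ‖lam i‖ ^ 2 = 1) :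
    E m m (stdVec fun a => w a * ‖lam (β a)‖ ^ 2) =
      E k k (stdVec fun i => ‖lam i‖ ^ 2) +
        ∑ i, ‖lam i‖ ^ 2 * E m m (stdVec fun a => if β a = i then w a else 0) := by
  let block : Fin k → Fin m → ℝ := fun i a => if β a = i then w a else 0
  have hblock : ∀ i, IsProbDist (block i) :=
    fun i => ⟨fun a => by by_cases h : β a = i <;> simp [block, h, hw a],
      by rw [← hw1 i, Finset.sum_filter]⟩
  have hdisj : ∀ i j, i ≠ j → ∀ a, block i a * block j a = 0 := by
    intro i j hij a
    by_cases hi : β a = i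
    · simp [block, hi, hij]
    · simp [block, hi]
  have hsum : ∑ i, lam i • stdVec (block i) = diagVec fun a => lam (β a) * √(w a) := by
    ext p
    by_cases hp : p.1 = p.2 <;>
      simp [stdVec, diagVec, block, hp, apply_ite Real.sqrt, apply_ite Complex.ofReal]
  have hnorm : (fun a => w a * ‖lam (β a)‖ ^ 2) = fun a => ‖lam (β a) * √(w a)‖ ^ 2 := by
    funext a
    rw [norm_mul, mul_pow, Complex.norm_real, Real.norm_of_nonneg (Real.sqrt_nonneg _),
      Real.sq_sqrt (hw a), mul_comm]
  rw [hnorm, ← hP2.apply_diagVec, ← hsum]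
  exact hP4 m m k _ (fun i => norm_stdVec_of_isProbDist (hblock i))
    (fun i j hij => schmidtOrthogonal_stdVec (hblock i).1 (hblock j).1 (hdisj i j hij)) lam hlam

theorem apply_stdVec_mergeLast_fiber_of_ne (hP3 : EmbeddingInvariant E)
    (hP4 : SuperpositionAdditive E) {N : ℕ} (η : ℝ) {i : Fin (N + 1)} (hi : i ≠ Fin.last N) :
    E (N + 2) (N + 2) (stdVec fun a => if mergeLast N a = i then splitWeights N η a else 0) =
      0 := by
  rw [hP3.apply_stdVec (σ := fun _ : Fin 1 => i.castSucc) (injective_of_subsingleton _)]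
  · convert hP4.apply_stdVec_const_one using 3
    funext
    simp [hi]
  · intro a ha
    induction a using Fin.lastCases with
    | last => simp [Ne.symm hi]
    | cast j =>
      have hj : j ≠ i := fun hj => ha ⟨0, by simp [hj]⟩
      simp [hj]

theorem apply_stdVec_mergeLast_fiber_last (hP3 : EmbeddingInvariant E) {N : ℕ} (η : ℝ) :
    E (N + 2) (N + 2)
        (stdVec fun a => if mergeLast N a = Fin.last N then splitWeights N η a else 0) =
      E 2 2 (stdVec ![η, 1 - η]) := by
  have hne : (Fin.last N).castSucc ≠ Fin.last (N + 1) := (Fin.castSucc_lt_last _).ne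
  have hσ : Injective ![(Fin.last N).castSucc, Fin.last (N + 1)] := by
    intro x y
    fin_cases x <;> fin_cases y <;> simp [hne, hne.symm]
  rw [hP3.apply_stdVec hσ]
  · congr 2
    funext x
    fin_cases x <;> simp
  · intro a ha
    induction a using Fin.lastCases with
    | last => exact absurd ⟨1, rfl⟩ ha
    | cast j =>
      have hj : j ≠ Fin.last N := fun hj => ha ⟨0, by simp [hj]⟩
      simp [hj]

end Axioms

/-- Under (P2)-(P4), the function induced by `E` on probability distributions
(its common value on pure states with given Schmidt coefficients) satisfies the
Khinchin–Faddeev recursion. -/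
theorem induced_function_satisfies_recursion
    (E : ∀ m n : ℕ, HT m n → ℝ)
    (hP2 : ∀ (m n : ℕ) (U : Matrix (Fin m) (Fin m) ℂ) (V : Matrix (Fin n) (Fin n) ℂ),
      U ∈ Matrix.unitaryGroup (Fin m) ℂ → V ∈ Matrix.unitaryGroup (Fin n) ℂ →
      ∀ ψ : HT m n, E m n (matVec (kron U V) ψ) = E m n ψ)
    (hP3 : ∀ (m n m' n' : ℕ) (f : H m →ₗᵢ[ℂ] H m') (g : H n →ₗᵢ[ℂ] H n')
      (ψ : HT m n), E m' n' (tensorMap f g ψ) = E m n ψ)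
    (hP4 : ∀ (m n k : ℕ) (ψ : Fin k → HT m n), (∀ i, ‖ψ i‖ = 1) →
      (∀ i j, i ≠ j → SchmidtOrthogonal (ψ i) (ψ j)) →
      ∀ lam : Fin k → ℂ, (∑ i, ‖lam i‖ ^ 2) = 1 →
      E m n (∑ i, lam i • ψ i)
        = E k k (stdVec fun i => ‖lam i‖ ^ 2) + ∑ i, ‖lam i‖ ^ 2 * E m n (ψ i)) :
    ∀ (N : ℕ) (lam : Fin (N + 1) → ℂ), (∑ i, ‖lam i‖ ^ 2) = 1 →
      ∀ η : ℝ, 0 ≤ η → η ≤ 1 →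
      E (N + 2) (N + 2) (stdVec (Fin.snoc
          (Function.update (fun i => ‖lam i‖ ^ 2) (Fin.last N)
            (η * ‖lam (Fin.last N)‖ ^ 2))
          ((1 - η) * ‖lam (Fin.last N)‖ ^ 2)))
        = E (N + 1) (N + 1) (stdVec fun i => ‖lam i‖ ^ 2)
          + ‖lam (Fin.last N)‖ ^ 2 * E 2 2 (stdVec ![η, 1 - η]) := by
  intro N lam hlam η hη0 hη1
  rw [← splitWeights_mul_norm_sq, apply_stdVec_grouping hP2 hP4 (mergeLast N)
    (splitWeights_nonneg hη0 hη1) (sum_splitWeights_fiber η) lam hlam,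
    Finset.sum_eq_single (Fin.last N)
      (fun i _ hi => by rw [apply_stdVec_mergeLast_fiber_of_ne hP3 hP4 η hi, mul_zero])
      (by simp),
    apply_stdVec_mergeLast_fiber_last hP3]

end
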